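/- For every n ≥ 2, χ_L(S_n(2)) = ⌈√n⌉ + 1. -/

import Mathlib

open SimpleGraph

/-- Distance from a vertex to a set of vertices, `d(u,S) = min {d(u,v) : v ∈ S}`. -/
noncomputable def distToSet {V : Type*} (G : SimpleGraph V) (u : V) (S : Set V) : ℕ :=
  sInf (G.dist u '' S)

/-- `c` is a locating coloring of `G` with `k` colors: a proper coloring such that any two
distinct vertices are resolved by some color class. -/
def IsLocatingColoring {V : Type*} (G : SimpleGraph V) {k : ℕ} (c : V → Fin k) : Prop :=
  (∀ u v : V, G.Adj u v → c u ≠ c v) ∧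
  ∀ u v : V, u ≠ v →
    ∃ i : Fin k, distToSet G u (c ⁻¹' {i}) ≠ distToSet G v (c ⁻¹' {i})

/-- The locating chromatic number `χ_L(G)`: the least `k` admitting a locating `k`-coloring. -/
noncomputable def locatingChromaticNumber {V : Type*} (G : SimpleGraph V) : ℕ :=
  sInf {k : ℕ | ∃ c : V → Fin k, IsLocatingColoring G c}

/-- The vertex set of the palm `S_n(a_1, …, a_n)`: a hub `none` and, for each leg
`i : Fin n` (representing leg `i+1`), vertices `j : Fin (a (i+1))`
(vertex `some ⟨i, j⟩` represents `a_{i+1, j+1}`). -/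
def PalmVert (n : ℕ) (a : ℕ → ℕ) : Type :=
  Option ((i : Fin n) × Fin (a ((i : ℕ) + 1)))

/-- The palm `S_n(a_1, …, a_n)`: the star `K_{1,n}` whose `i`-th edge has been subdivided
`a_i - 1` times; the hub is joined to the first vertex of each leg, and consecutive
vertices along a leg are adjacent. -/
def Palm (n : ℕ) (a : ℕ → ℕ) : SimpleGraph (PalmVert n a) :=
  SimpleGraph.fromRel fun u v =>
    match u, v with
    | none, some ⟨_, j⟩ => (j : ℕ) = 0
    | some ⟨i, j⟩, some ⟨i', j'⟩ => (i : ℕ) = (i' : ℕ) ∧ (j' : ℕ) = (j : ℕ) + 1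
    | _, _ => False

/-!
Swapping two legs of `S_n(2)` is a graph automorphism, and a locating colouring is never invariant
under an automorphism that moves a vertex. Hence the legs carry pairwise distinct colour pairs
`(c(a_{i,1}), c(a_{i,2}))`; the first entry avoids the colour of the hub and the second differs from
the first, so a locating `k`-colouring forces `n ≤ (k - 1)²`.

Conversely, if `n ≤ m²`, colour the hub `0` and give the legs distinct pairs with first entry
nonzero, second entry different from the first, and not all first entries equal. Two distinct
vertices of the same colour are then always separated by a colour class that contains a neighbour
of one of them but no neighbour of the other.
-/

section distToSet

variable {V W : Type*} {G : SimpleGraph V} {G' : SimpleGraph W}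

theorem distToSet_eq_zero_iff (hG : G.Preconnected) {u : V} {S : Set V} (hS : S.Nonempty) :
    distToSet G u S = 0 ↔ u ∈ S := by
  refine ⟨fun h => ?_, fun hu => Nat.sInf_eq_zero.2 (.inl ⟨u, hu, dist_self⟩)⟩
  obtain ⟨w, hw, hdist⟩ := Nat.sInf_mem (hS.image (G.dist u))
  rw [← distToSet, h, (hG u w).dist_eq_zero_iff] at hdist
  exact hdist ▸ hw

theorem distToSet_eq_one_iff (hG : G.Preconnected) {u : V} {S : Set V} :
    distToSet G u S = 1 ↔ u ∉ S ∧ ∃ w ∈ S, G.Adj u w := by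
  constructor
  · intro h
    have hS : S.Nonempty := Set.nonempty_iff_ne_empty.2 fun he => by simp [distToSet, he] at h
    obtain ⟨w, hw, hdist⟩ := Nat.sInf_mem (hS.image (G.dist u))
    rw [← distToSet, h, dist_eq_one_iff_adj] at hdist
    exact ⟨fun hu => by simp [(distToSet_eq_zero_iff hG hS).2 hu] at h, w, hw, hdist⟩
  · rintro ⟨hu, w, hw, huw⟩
    have hne : distToSet G u S ≠ 0 := (distToSet_eq_zero_iff hG ⟨w, hw⟩).not.2 hu
    have hle : distToSet G u S ≤ 1 := Nat.sInf_le ⟨w, hw, dist_eq_one_iff_adj.2 huw⟩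
    omega

theorem SimpleGraph.Hom.edist_map_le (f : G →g G') (u v : V) :
    G'.edist (f u) (f v) ≤ G.edist u v := by
  by_cases h : G.Reachable u v
  · obtain ⟨p, hp⟩ := h.exists_walk_length_eq_edist
    exact hp ▸ (edist_le (p.map f)).trans_eq (by rw [Walk.length_map])
  · exact (edist_eq_top_of_not_reachable h).symm ▸ le_top

theorem SimpleGraph.Iso.dist_map (φ : G ≃g G') (u v : V) :
    G'.dist (φ u) (φ v) = G.dist u v := by
  refine congrArg ENat.toNat (le_antisymm (φ.toHom.edist_map_le u v) ?_)
  simpa using φ.symm.toHom.edist_map_le (φ u) (φ v)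

theorem SimpleGraph.Iso.distToSet_map (φ : G ≃g G') (u : V) (S : Set W) :
    distToSet G' (φ u) S = distToSet G u (φ ⁻¹' S) := by
  have : G.dist u = G'.dist (φ u) ∘ φ := funext fun v => (φ.dist_map u v).symm
  rw [distToSet, distToSet, this, Set.image_comp, Set.image_preimage_eq S φ.surjective]

end distToSet

section IsLocatingColoring

variable {V α : Type*} {G : SimpleGraph V} {c : V → α} {u v : V}

def Resolves (G : SimpleGraph V) (c : V → α) (u v : V) : Prop :=
  ∃ i, distToSet G u (c ⁻¹' {i}) ≠ distToSet G v (c ⁻¹' {i})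

theorem Resolves.symm (h : Resolves G c u v) : Resolves G c v u :=
  let ⟨i, hi⟩ := h; ⟨i, hi.symm⟩

theorem resolves_of_color_ne (hG : G.Preconnected) (h : c u ≠ c v) : Resolves G c u v := by
  have hclass : (c ⁻¹' {c u}).Nonempty := ⟨u, rfl⟩
  refine ⟨c u, ?_⟩
  rw [(distToSet_eq_zero_iff hG hclass).2 rfl]
  exact Ne.symm ((distToSet_eq_zero_iff hG hclass).not.2 (Ne.symm h))

theorem resolves_of_adj (hG : G.Preconnected) {w : V} (huw : G.Adj u w) (hu : c u ≠ c w)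
    (hv : ∀ x, G.Adj v x → c x ≠ c w) : Resolves G c u v := by
  refine ⟨c w, ?_⟩
  rw [(distToSet_eq_one_iff hG (S := c ⁻¹' {c w})).2 ⟨hu, w, rfl, huw⟩]
  intro h
  obtain ⟨-, x, hx, hvx⟩ := (distToSet_eq_one_iff hG).1 h.symm
  exact hv x hvx hx

variable {k : ℕ} {c : V → Fin k}

theorem isLocatingColoring_of_resolves_same_color (hG : G.Preconnected)
    (hproper : ∀ u v, G.Adj u v → c u ≠ c v)
    (hsame : ∀ u v, u ≠ v → c u = c v → Resolves G c u v) :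
    IsLocatingColoring G c :=
  ⟨hproper, fun u v huv =>
    if h : c u = c v then hsame u v huv h else resolves_of_color_ne hG h⟩

theorem IsLocatingColoring.apply_eq_of_iso (hc : IsLocatingColoring G c)
    (φ : G ≃g G) (hφ : ∀ v, c (φ v) = c v) (v : V) : φ v = v := by
  by_contra hne
  obtain ⟨i, hi⟩ := hc.2 _ _ hne
  have hinv : φ ⁻¹' (c ⁻¹' {i}) = c ⁻¹' {i} := by ext; simp [hφ]
  exact hi (by rw [φ.distToSet_map, hinv])

end IsLocatingColoring

theorem Fintype.card_le_pred_mul_pred {ι α : Type*} [Fintype ι] [Fintype α] [DecidableEq α]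
    {h : α} {f g : ι → α} (hf : ∀ i, f i ≠ h) (hg : ∀ i, g i ≠ f i)
    (hfg : Function.Injective fun i => (f i, g i)) :
    Fintype.card ι ≤ (Fintype.card α - 1) * (Fintype.card α - 1) := by
  let F : ι → (a : {a // a ≠ h}) × {b // b ≠ a.1} := fun i =>
    ⟨⟨f i, hf i⟩, ⟨g i, hg i⟩⟩
  have hF : Function.Injective F := fun i j hij =>
    hfg (congrArg (fun x => ((x.1 : α), (x.2 : α))) hij)
  simpa [Fintype.card_sigma, Fintype.card_subtype_compl] using Fintype.card_le_of_injective F hF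

namespace Palm

variable {n : ℕ} {a : ℕ → ℕ}

def hub : PalmVert n a := none

def vert (i : Fin n) (j : Fin (a (i + 1))) : PalmVert n a := some ⟨i, j⟩

@[elab_as_elim]
theorem hub_vert_cases {motive : PalmVert n a → Prop} (hub : motive hub)
    (vert : ∀ i j, motive (vert i j)) (u : PalmVert n a) : motive u := by
  rcases u with _ | ⟨i, j⟩
  exacts [hub, vert i j]

@[simp] theorem vert_inj {i i' : Fin n} {j : Fin (a (i + 1))} {j' : Fin (a (i' + 1))} :
    vert i j = vert i' j' ↔ i = i' ∧ (j : ℕ) = j' := by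
  constructor
  · intro h; cases h; exact ⟨rfl, rfl⟩
  · rintro ⟨rfl, h⟩; rw [Fin.val_inj] at h; rw [h]

@[simp] theorem hub_ne_vert {i : Fin n} {j : Fin (a (i + 1))} : hub ≠ vert i j := nofun

theorem adj_hub_vert {i : Fin n} {j : Fin (a (i + 1))} :
    (Palm n a).Adj hub (vert i j) ↔ (j : ℕ) = 0 := by
  show (SimpleGraph.fromRel _).Adj _ _ ↔ _
  rw [SimpleGraph.fromRel_adj]; simpa [hub, vert] using fun _ => hub_ne_vert (j := j)

theorem adj_vert_vert {i i' : Fin n} {j : Fin (a (i + 1))} {j' : Fin (a (i' + 1))} :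
    (Palm n a).Adj (vert i j) (vert i' j') ↔
      i = i' ∧ ((j' : ℕ) = j + 1 ∨ (j : ℕ) = j' + 1) := by
  show (SimpleGraph.fromRel _).Adj _ _ ↔ _
  rw [SimpleGraph.fromRel_adj, Ne, vert_inj]
  simp only [vert, Fin.val_inj]
  constructor
  · rintro ⟨-, ⟨rfl, h⟩ | ⟨rfl, h⟩⟩
    · exact ⟨rfl, .inl h⟩
    · exact ⟨rfl, .inr h⟩
  · rintro ⟨rfl, h⟩
    exact ⟨by omega, h.imp (⟨rfl, ·⟩) (⟨rfl, ·⟩)⟩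

theorem preconnected : (Palm n a).Preconnected := by
  suffices ∀ v, (Palm n a).Reachable hub v from fun u v => (this u).symm.trans (this v)
  intro v
  induction v using hub_vert_cases with
  | hub => rfl
  | vert i j =>
    obtain ⟨j, hj⟩ := j
    induction j with
    | zero => exact (adj_hub_vert.2 rfl).reachable
    | succ j ih => exact (ih (by omega)).trans (adj_vert_vert.2 ⟨rfl, .inl rfl⟩).reachable

section permLegs

variable {m : ℕ}

def permLegsEquiv (σ : Equiv.Perm (Fin n)) :
    PalmVert n (fun _ => m) ≃ PalmVert n (fun _ => m) where
  toFun := Option.map fun x => ⟨σ x.1, x.2⟩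
  invFun := Option.map fun x => ⟨σ.symm x.1, x.2⟩
  left_inv := by rintro (_ | ⟨i, j⟩) <;> simp <;> rfl
  right_inv := by rintro (_ | ⟨i, j⟩) <;> simp <;> rfl

@[simp] theorem permLegsEquiv_hub (σ : Equiv.Perm (Fin n)) : permLegsEquiv (m := m) σ hub = hub :=
  rfl

@[simp] theorem permLegsEquiv_vert (σ : Equiv.Perm (Fin n)) (i : Fin n) (j : Fin m) :
    permLegsEquiv σ (vert i j) = vert (σ i) j := rfl

def permLegs (σ : Equiv.Perm (Fin n)) : Palm n (fun _ => m) ≃g Palm n (fun _ => m) where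
  toEquiv := permLegsEquiv σ
  map_rel_iff' {u v} := by
    induction u using hub_vert_cases <;> induction v using hub_vert_cases <;>
      simp [adj_hub_vert, adj_vert_vert, adj_comm _ _ hub]

@[simp] theorem permLegs_apply (σ : Equiv.Perm (Fin n)) (u : PalmVert n (fun _ => m)) :
    permLegs σ u = permLegsEquiv σ u := rfl

end permLegs

section TwoLegs

def inner (i : Fin n) : PalmVert n (fun _ => 2) := vert i 0

def leaf (i : Fin n) : PalmVert n (fun _ => 2) := vert i 1

@[elab_as_elim]
theorem hub_inner_leaf_cases {motive : PalmVert n (fun _ => 2) → Prop} (hub : motive hub)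
    (inner : ∀ i, motive (inner i)) (leaf : ∀ i, motive (leaf i))
    (u : PalmVert n (fun _ => 2)) :
    motive u := by
  induction u using hub_vert_cases with
  | hub => exact hub
  | vert i j => fin_cases j; exacts [inner i, leaf i]

theorem adj_hub_iff {u : PalmVert n (fun _ => 2)} :
    (Palm n fun _ => 2).Adj hub u ↔ ∃ i, u = inner i := by
  induction u using hub_inner_leaf_cases <;> simp [inner, leaf, adj_hub_vert, eq_comm]

theorem adj_inner_iff {i : Fin n} {u : PalmVert n (fun _ => 2)} :
    (Palm n fun _ => 2).Adj (inner i) u ↔ u = hub ∨ u = leaf i := by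
  induction u using hub_inner_leaf_cases <;>
    simp [inner, leaf, adj_comm _ _ hub, adj_hub_vert, adj_vert_vert, eq_comm]

theorem adj_leaf_iff {i : Fin n} {u : PalmVert n (fun _ => 2)} :
    (Palm n fun _ => 2).Adj (leaf i) u ↔ u = inner i := by
  induction u using hub_inner_leaf_cases <;>
    simp [inner, leaf, adj_comm _ _ hub, adj_hub_vert, adj_vert_vert, eq_comm]

theorem adj_hub_inner (i : Fin n) : (Palm n fun _ => 2).Adj hub (inner i) :=
  adj_hub_iff.2 ⟨i, rfl⟩

theorem adj_inner_leaf (i : Fin n) : (Palm n fun _ => 2).Adj (inner i) (leaf i) :=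
  adj_inner_iff.2 (.inr rfl)

variable {k : ℕ} {c : PalmVert n (fun _ => 2) → Fin k}

theorem _root_.IsLocatingColoring.injective_legColors
    (hc : IsLocatingColoring (Palm n fun _ => 2) c) :
    Function.Injective fun i => (c (inner i), c (leaf i)) := by
  intro i i' h
  simp only [Prod.mk.injEq] at h
  have hswap : ∀ v, c (permLegs (Equiv.swap i i') v) = c v := by
    intro v
    induction v using hub_inner_leaf_cases with
    | hub => rfl
    | inner t => exact Equiv.apply_swap_eq_self (v := fun t => c (inner t)) h.1 t
    | leaf t => exact Equiv.apply_swap_eq_self (v := fun t => c (leaf t)) h.2 t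
  have := hc.apply_eq_of_iso (permLegs (Equiv.swap i i')) hswap (inner i)
  simpa [inner] using this.symm

theorem _root_.IsLocatingColoring.le_pred_mul_pred
    (hc : IsLocatingColoring (Palm n fun _ => 2) c) :
    n ≤ (k - 1) * (k - 1) := by
  simpa using Fintype.card_le_pred_mul_pred (fun i => (hc.1 _ _ (adj_hub_inner i)).symm)
    (fun i => (hc.1 _ _ (adj_inner_leaf i)).symm) hc.injective_legColors

section Resolves

variable {α : Type*} {c : PalmVert n (fun _ => 2) → α}

theorem resolves_hub_leaf (hinner : ∀ i, c (inner i) ≠ c hub)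
    (hne : ∃ i i', c (inner i) ≠ c (inner i')) (i : Fin n) :
    Resolves (Palm n fun _ => 2) c hub (leaf i) := by
  obtain ⟨t, ht⟩ : ∃ t, c (inner t) ≠ c (inner i) := by
    obtain ⟨t, t', htt'⟩ := hne
    by_cases ht : c (inner t) = c (inner i)
    exacts [⟨t', ht ▸ htt'.symm⟩, ⟨t, ht⟩]
  exact resolves_of_adj preconnected (adj_hub_inner t) (hinner t).symm
    fun _ hx => adj_leaf_iff.1 hx ▸ ht.symm

theorem resolves_inner_leaf (hinner : ∀ i, c (inner i) ≠ c hub) (i i' : Fin n) :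
    Resolves (Palm n fun _ => 2) c (inner i) (leaf i') :=
  resolves_of_adj preconnected (adj_hub_inner i).symm (hinner i)
    fun _ hx => adj_leaf_iff.1 hx ▸ hinner i'

theorem resolves_inner_inner (hleaf : ∀ i, c (leaf i) ≠ c (inner i)) {i i' : Fin n}
    (hhub : c (leaf i) ≠ c hub) (h : c (leaf i) ≠ c (leaf i')) :
    Resolves (Palm n fun _ => 2) c (inner i) (inner i') :=
  resolves_of_adj preconnected (adj_inner_leaf i) (hleaf i).symm fun x hx => by
    rcases adj_inner_iff.1 hx with rfl | rfl
    exacts [hhub.symm, h.symm]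

theorem resolves_leaf_leaf (hleaf : ∀ i, c (leaf i) ≠ c (inner i)) {i i' : Fin n}
    (h : c (inner i) ≠ c (inner i')) : Resolves (Palm n fun _ => 2) c (leaf i) (leaf i') :=
  resolves_of_adj preconnected (adj_inner_leaf i).symm (hleaf i)
    fun _ hx => adj_leaf_iff.1 hx ▸ h.symm

end Resolves

theorem isLocatingColoring_of_injective (hinner : ∀ i, c (inner i) ≠ c hub)
    (hleaf : ∀ i, c (leaf i) ≠ c (inner i))
    (hinj : Function.Injective fun i => (c (inner i), c (leaf i)))
    (hne : ∃ i i', c (inner i) ≠ c (inner i')) :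
    IsLocatingColoring (Palm n fun _ => 2) c := by
  refine isLocatingColoring_of_resolves_same_color preconnected ?_ ?_
  · intro u v huv
    induction u using hub_inner_leaf_cases with
    | hub => obtain ⟨i, rfl⟩ := adj_hub_iff.1 huv; exact (hinner i).symm
    | inner i => rcases adj_inner_iff.1 huv with rfl | rfl; exacts [hinner i, (hleaf i).symm]
    | leaf i => rw [adj_leaf_iff.1 huv]; exact hleaf i
  · intro u v huv hc
    induction u using hub_inner_leaf_cases <;> induction v using hub_inner_leaf_cases
    case hub.hub => exact absurd rfl huv
    case hub.inner i => exact absurd hc.symm (hinner i)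
    case hub.leaf i => exact resolves_hub_leaf hinner hne i
    case inner.hub i => exact absurd hc (hinner i)
    case inner.inner i i' =>
      have hleaf_ne : c (leaf i) ≠ c (leaf i') := fun h => huv (by rw [hinj (Prod.ext hc h)])
      by_cases hhub : c (leaf i) = c hub
      · exact (resolves_inner_inner hleaf (hhub ▸ hleaf_ne.symm) hleaf_ne.symm).symm
      · exact resolves_inner_inner hleaf hhub hleaf_ne
    case inner.leaf i i' => exact resolves_inner_leaf hinner i i'
    case leaf.hub i => exact (resolves_hub_leaf hinner hne i).symm
    case leaf.inner i i' => exact (resolves_inner_leaf hinner i' i).symm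
    case leaf.leaf i i' =>
      exact resolves_leaf_leaf hleaf fun h => huv (by rw [hinj (Prod.ext h hc)])

def legColoring {α : Type*} (h : α) (f g : Fin n → α) : PalmVert n (fun _ => 2) → α :=
  fun u => Option.elim u h fun x => ![f x.1, g x.1] x.2

section legColoring

variable {α : Type*} (h : α) (f g : Fin n → α) (i : Fin n)

@[simp] theorem legColoring_inner : legColoring h f g (inner i) = f i := rfl

@[simp] theorem legColoring_leaf : legColoring h f g (leaf i) = g i := rfl

end legColoring

theorem exists_isLocatingColoring {m : ℕ} (hn : 2 ≤ n) (hnm : n ≤ m * m) :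
    ∃ c : PalmVert n (fun _ => 2) → Fin (m + 1), IsLocatingColoring (Palm n fun _ => 2) c := by
  -- `p i = (i / m, i % m)`, so legs `0` and `1` get different inner colours.
  let p : Fin n → Fin m × Fin m := fun i => finProdFinEquiv.symm (Fin.castLE hnm i)
  have hp : Function.Injective p := finProdFinEquiv.symm.injective.comp (Fin.castLE_injective hnm)
  let f (i : Fin n) : Fin (m + 1) := (p i).2.succ
  refine ⟨legColoring 0 f (fun i => f i + (p i).1.succ), isLocatingColoring_of_injective
    (fun i => Fin.succ_ne_zero _) (fun i => by simp [f]) ?_ ?_⟩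
  · intro i i' h
    obtain ⟨h2, h1⟩ := Prod.mk.inj h
    rw [legColoring_inner, legColoring_inner] at h2
    rw [legColoring_leaf, legColoring_leaf, h2] at h1
    exact hp (Prod.ext (Fin.succ_injective _ (add_left_cancel h1)) (Fin.succ_injective _ h2))
  · refine ⟨⟨0, by omega⟩, ⟨1, by omega⟩, ?_⟩
    have : m ≠ 1 := by rintro rfl; omega
    simpa [f, p, Fin.ext_iff]

theorem exists_isLocatingColoring_iff (hn : 2 ≤ n) (m : ℕ) :
    (∃ c : PalmVert n (fun _ => 2) → Fin (m + 1), IsLocatingColoring (Palm n fun _ => 2) c) ↔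
      n ≤ m * m :=
  ⟨fun ⟨_, hc⟩ => by simpa using hc.le_pred_mul_pred, exists_isLocatingColoring hn⟩

end TwoLegs

end Palm

theorem Real.natCeil_sqrt_le_iff {n m : ℕ} : ⌈√(n : ℝ)⌉₊ ≤ m ↔ n ≤ m * m := by
  rw [Nat.ceil_le, Real.sqrt_le_left (Nat.cast_nonneg m), ← Nat.cast_pow, Nat.cast_le, sq]

theorem locatingChromaticNumber_regularPalm_two_eq_natCeil {n : ℕ} (hn : 2 ≤ n) :
    locatingChromaticNumber (Palm n fun _ => 2) = ⌈√(n : ℝ)⌉₊ + 1 := by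
  have hmem := (Palm.exists_isLocatingColoring_iff hn _).2 (Real.natCeil_sqrt_le_iff.1 le_rfl)
  refine le_antisymm (Nat.sInf_le hmem) (le_csInf ⟨_, hmem⟩ ?_)
  rintro (_ | m) ⟨c, hc⟩
  · exact (c Palm.hub).elim0
  · exact Nat.succ_le_succ <|
      Real.natCeil_sqrt_le_iff.2 ((Palm.exists_isLocatingColoring_iff hn m).1 ⟨c, hc⟩)

/-- For every `n ≥ 2`, `χ_L(S_n(2)) = ⌈√n⌉ + 1`. -/
theorem locatingChromaticNumber_regularPalm_two (n : ℕ) (hn : 2 ≤ n) :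
    (locatingChromaticNumber (Palm n (fun _ => 2)) : ℤ) = ⌈Real.sqrt n⌉ + 1 := by
  rw [locatingChromaticNumber_regularPalm_two_eq_natCeil hn,
    ← Int.natCast_ceil_eq_ceil (Real.sqrt_nonneg _)]
  push_cast
  rfl
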